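/- Let λ be a Young diagram with n boxes and maximal hook length s = s(λ), and let 1 ≤ ℓ ≤ λ_1 be an integer with ℓ ≥ n/s. Then the excited sum satisfies S(λ, [ℓ]) ≤ (4e²)^ℓ · s^ℓ. -/

import Mathlib

open scoped BigOperators

namespace ThickHookPaper

/-- The diagonal length `δ(λ)` of a Young diagram: the number of diagonal boxes `(i,i)` in `λ`. -/
def diagLen (l : YoungDiagram) : ℕ := (l.cells.filter (fun u => u.1 = u.2)).card

/-- The maximal hook length `s(λ) = λ₁ + λ₁' - 1` of a Young diagram. -/
def maxHook (l : YoungDiagram) : ℕ := l.rowLen 0 + l.colLen 0 - 1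

/-- The hook length of the box `u = (i, j)` in `λ`. -/
def hook (l : YoungDiagram) (u : ℕ × ℕ) : ℕ :=
  (l.rowLen u.1 - u.2) + (l.colLen u.2 - u.1) - 1

/-- The number of standard tableaux of the skew shape `λ \ μ`, defined as the number of
saturated chains of Young diagrams from `μ` to `λ` (each step adding exactly one box). -/
noncomputable def skewSYT (μ l : YoungDiagram) : ℕ :=
  Nat.card {f : Fin (l.card - μ.card + 1) → YoungDiagram //
    f 0 = μ ∧ f (Fin.last _) = l ∧
    ∀ i : Fin (l.card - μ.card),
      f i.castSucc ≤ f i.succ ∧ (f i.succ).card = (f i.castSucc).card + 1}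

/-- The number of standard Young tableaux of shape `λ`, i.e. the dimension `d_λ`. -/
noncomputable def dim (l : YoungDiagram) : ℕ := skewSYT ⊥ l

/-! ### Ribbons and the Murnaghan--Nakayama character -/

/-- Two boxes are adjacent if they share an edge. -/
def Adj (u v : ℕ × ℕ) : Prop :=
  (u.1 = v.1 ∧ (u.2 + 1 = v.2 ∨ v.2 + 1 = u.2)) ∨
    (u.2 = v.2 ∧ (u.1 + 1 = v.1 ∨ v.1 + 1 = u.1))

/-- A finite set of boxes is connected if any two of its boxes are linked by a path of
adjacent boxes inside the set. -/
def ConnectedCells (c : Finset (ℕ × ℕ)) : Prop :=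
  ∀ u ∈ c, ∀ v ∈ c, Relation.ReflTransGen (fun x y => x ∈ c ∧ y ∈ c ∧ Adj x y) u v

/-- A set of boxes contains no `2 × 2` square. -/
def No2x2 (c : Finset (ℕ × ℕ)) : Prop :=
  ∀ i j : ℕ, ¬ ((i, j) ∈ c ∧ (i + 1, j) ∈ c ∧ (i, j + 1) ∈ c ∧ (i + 1, j + 1) ∈ c)

/-- `IsRibbon μ l` : the skew diagram `l \ μ` is a ribbon (nonempty, connected, no 2×2 square). -/
def IsRibbon (μ l : YoungDiagram) : Prop :=
  μ ≤ l ∧ (l.cells \ μ.cells).Nonempty ∧ ConnectedCells (l.cells \ μ.cells) ∧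
    No2x2 (l.cells \ μ.cells)

/-- The height of a set of boxes: the difference between the largest and smallest
row indices occurring in it. -/
noncomputable def cellsHeight (c : Finset (ℕ × ℕ)) : ℕ :=
  c.sup Prod.fst - sInf (Prod.fst '' (c : Set (ℕ × ℕ)))

/-- `IsRibbonTableau l α f` : `f` is a ribbon tableau of shape `l` and weight `α`, i.e. a
chain `⊥ = f 0 ⊆ f 1 ⊆ ... ⊆ f N = l` where each successive skew diagram is a ribbon
with `α i` boxes. -/
def IsRibbonTableau (l : YoungDiagram) (α : List ℕ) (f : Fin (α.length + 1) → YoungDiagram) :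
    Prop :=
  f 0 = ⊥ ∧ f (Fin.last _) = l ∧
  ∀ i : Fin α.length,
    IsRibbon (f i.castSucc) (f i.succ) ∧
      ((f i.succ).cells \ (f i.castSucc).cells).card = α.get i

/-- The total height of a ribbon tableau: the sum of the heights of its ribbons. -/
noncomputable def tabHeight (N : ℕ) (f : Fin (N + 1) → YoungDiagram) : ℕ :=
  ∑ i : Fin N, cellsHeight ((f i.succ).cells \ (f i.castSucc).cells)

/-- The Murnaghan--Nakayama alternating sum over ribbon tableaux of shape `l` and weight `α`. -/
noncomputable def charMN (l : YoungDiagram) (α : List ℕ) : ℤ :=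
  ∑ᶠ f ∈ {f : Fin (α.length + 1) → YoungDiagram | IsRibbonTableau l α f},
    (-1 : ℤ) ^ tabHeight α.length f

/-- The cycle type of a permutation including fixed points (as parts equal to `1`). -/
def fullCycleType {n : ℕ} (σ : Equiv.Perm (Fin n)) : Multiset ℕ :=
  σ.cycleType + Multiset.replicate (n - σ.support.card) 1

/-- The character `ch^λ(σ)` of the irreducible representation of `S_n` indexed by `λ ⊢ n`,
defined via the Murnaghan--Nakayama rule. -/
noncomputable def charPerm (l : YoungDiagram) {n : ℕ} (σ : Equiv.Perm (Fin n)) : ℤ :=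
  charMN l (fullCycleType σ).toList

/-- The total number of cycles of `σ`, fixed points counted as 1-cycles. -/
def cyc {n : ℕ} (σ : Equiv.Perm (Fin n)) : ℕ := Multiset.card (fullCycleType σ)

/-- `|σ|`: the minimal number of transpositions whose product is `σ`, which equals
`n` minus the number of cycles of `σ` (fixed points included). -/
def transLen {n : ℕ} (σ : Equiv.Perm (Fin n)) : ℕ := n - cyc σ

/-! ### Excited diagrams -/

/-- The upper-right square of a box. -/
def URS (u : ℕ × ℕ) : Finset (ℕ × ℕ) :=
  {u, (u.1 + 1, u.2), (u.1, u.2 + 1), (u.1 + 1, u.2 + 1)}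

/-- One simple excitation step: an excitable box of `E` is moved diagonally up-right. -/
def ExciteStep (l : YoungDiagram) (E E' : Finset (ℕ × ℕ)) : Prop :=
  ∃ u ∈ E, URS u ⊆ l.cells ∧ E ∩ URS u = {u} ∧
    E' = insert (u.1 + 1, u.2 + 1) (E.erase u)

/-- The set `𝓔(λ, μ)` of excited diagrams of `μ` in `λ`. -/
def Excited (l μ : YoungDiagram) : Set (Finset (ℕ × ℕ)) :=
  {E | Relation.ReflTransGen (ExciteStep l) μ.cells E}

/-- The excited sum `S(λ, μ) = Σ_{E ∈ 𝓔(λ,μ)} Π_{u ∈ E} H(λ, u)`. -/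
noncomputable def excitedSum (l μ : YoungDiagram) : ℕ :=
  ∑ᶠ E ∈ Excited l μ, ∏ u ∈ E, hook l u

/-! ### Rectangles, rows -/

/-- The rectangular Young diagram `[a^b]` with `b` rows of length `a`. -/
def rect (a b : ℕ) : YoungDiagram :=
  ⟨Finset.range b ×ˢ Finset.range a, by
    rintro ⟨i, j⟩ ⟨i', j'⟩ ⟨h1, h2⟩ hu
    simp only [Finset.coe_product, Set.mem_prod, Finset.mem_coe, Finset.mem_range] at *
    exact ⟨lt_of_le_of_lt h1 hu.1, lt_of_le_of_lt h2 hu.2⟩⟩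

/-- The one-row Young diagram `[ℓ]`. -/
def rowDiagram (ℓ : ℕ) : YoungDiagram := rect ℓ 1

/-! ### Thick hook decompositions -/

/-- The boxes of `λ` whose diagonal index `min i j` lies in `[lo, hi)`: this is the thick hook
`λ^{(lo+1) → hi}` in the (1-indexed) notation of the paper. -/
def thickHookCells (l : YoungDiagram) (lo hi : ℕ) : Finset (ℕ × ℕ) :=
  l.cells.filter (fun u => lo ≤ min u.1 u.2 ∧ min u.1 u.2 < hi)

/-- An `(a, b)` thick hook decomposition of `λ`: diagonal indices
`0 = i_0 < i_1 < ... < i_p = δ(λ)` such that each thick hook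
`T_j = λ^{(i_{j-1}+1) → i_j}` has between `a` and `b` boxes. -/
structure ThickHookDecomp (l : YoungDiagram) (a b : ℝ) where
  p : ℕ
  p_pos : 0 < p
  idx : ℕ → ℕ
  idx_zero : idx 0 = 0
  idx_last : idx p = diagLen l
  idx_strictMono : ∀ j < p, idx j < idx (j + 1)
  size_lb : ∀ j < p, a ≤ ((thickHookCells l (idx j) (idx (j + 1))).card : ℝ)
  size_ub : ∀ j < p, ((thickHookCells l (idx j) (idx (j + 1))).card : ℝ) ≤ b

/-- The corners of a Young diagram: boxes `u ∈ λ` such that neither the box to the right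
nor the box above (in the French convention: the next box in the row and in the column)
belongs to `λ`. -/
def corners (l : YoungDiagram) : Finset (ℕ × ℕ) :=
  l.cells.filter (fun u => (u.1, u.2 + 1) ∉ l ∧ (u.1 + 1, u.2) ∉ l)

/-!
Every excited diagram of the row `[ℓ]` in `λ` has the form `{(k j, j + k j) | j < ℓ}` for a
weakly increasing `k`, so it is determined by the multiset of its row indices. Since
`H(λ, (k, j + k)) ≤ H(λ, (k, k)) =: x_k`, the excited sum is at most the complete homogeneous
symmetric polynomial `h_ℓ(x)` in the diagonal hook lengths. Comparing `h_ℓ(x) t^ℓ` with the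
generating function `∏ (1 - x_k t)⁻¹` at `t = 1 / (2s)`, where `x_k ≤ s` and
`(1 - y)⁻¹ ≤ e^{2y}` for `y ≤ 1/2`, gives `h_ℓ(x) ≤ (2s)^ℓ e^{∑ x_k / s}`. The diagonal hooks are
disjoint, so `∑ x_k ≤ n ≤ ℓ s`, hence `S(λ, [ℓ]) ≤ (2e)^ℓ s^ℓ`.
-/

open Finset

section CompleteHomogeneous

variable {ι : Type*} [DecidableEq ι]

theorem geom_sum_le_inv_one_sub {K : Type*} [Field K] [LinearOrder K] [IsStrictOrderedRing K]
    {y : K} (hy₀ : 0 ≤ y) (hy₁ : y < 1) (n : ℕ) :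
    ∑ i ∈ range n, y ^ i ≤ (1 - y)⁻¹ := by
  simpa [← range_eq_Ico, one_div] using geom_sum_Ico_le_of_lt_one (m := 0) (n := n) hy₀ hy₁

theorem sum_sym_prod_map_le_prod_inv_one_sub {K : Type*} [Field K] [LinearOrder K]
    [IsStrictOrderedRing K] (s : Finset ι) (y : ι → K) (hy₀ : ∀ i ∈ s, 0 ≤ y i)
    (hy₁ : ∀ i ∈ s, y i < 1) (n : ℕ) :
    ∑ m ∈ s.sym n, ((m : Multiset ι).map y).prod ≤ ∏ i ∈ s, (1 - y i)⁻¹ := by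
  induction s using Finset.induction_on generalizing n with
  | empty => cases n <;> simp [sym_zero, Sym.eq_nil_of_card_zero]
  | insert a s ha ih =>
    have ha₀ := hy₀ a (mem_insert_self a s)
    have ha₁ := hy₁ a (mem_insert_self a s)
    have hs₀ : ∀ i ∈ s, 0 ≤ y i := fun i hi => hy₀ i (mem_insert_of_mem hi)
    have hs₁ : ∀ i ∈ s, y i < 1 := fun i hi => hy₁ i (mem_insert_of_mem hi)
    -- split a multiset on `insert a s` into its copies of `a` and a multiset on `s`
    calc ∑ m ∈ (insert a s).sym n, ((m : Multiset ι).map y).prod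
        = ∑ i : Fin (n + 1),
            y a ^ (i : ℕ) * ∑ m ∈ s.sym (n - i), ((m : Multiset ι).map y).prod := by
          rw [← sum_coe_sort, ← (symInsertEquiv ha).symm.sum_comp, Fintype.sum_sigma]
          refine Fintype.sum_congr _ _ fun i => ?_
          rw [mul_sum, ← sum_coe_sort (s.sym (n - i))]
          refine Fintype.sum_congr _ _ fun m => ?_
          simp only [symInsertEquiv_symm_apply_coe, Sym.coe_fill, Multiset.map_add,
            Multiset.prod_add, Sym.coe_replicate, Multiset.map_replicate, Multiset.prod_replicate,
            mul_comm]
      _ ≤ ∑ i : Fin (n + 1), y a ^ (i : ℕ) * ∏ i ∈ s, (1 - y i)⁻¹ := by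
          gcongr with i
          exact ih hs₀ hs₁ _
      _ = (∑ i ∈ range (n + 1), y a ^ i) * ∏ i ∈ s, (1 - y i)⁻¹ := by
          rw [Fin.sum_univ_eq_sum_range (fun i => y a ^ i * ∏ i ∈ s, (1 - y i)⁻¹), sum_mul]
      _ ≤ ∏ i ∈ insert a s, (1 - y i)⁻¹ := by
          rw [prod_insert ha]
          gcongr
          · exact prod_nonneg fun i hi => inv_nonneg.2 (sub_nonneg.2 (hs₁ i hi).le)
          · exact geom_sum_le_inv_one_sub ha₀ ha₁ _

theorem inv_one_sub_le_exp_two_mul {y : ℝ} (hy₀ : 0 ≤ y) (hy : y ≤ 1 / 2) :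
    (1 - y)⁻¹ ≤ Real.exp (2 * y) := by
  calc (1 - y)⁻¹ ≤ 1 + 2 * y := by
        rw [inv_le_iff_one_le_mul₀ (by linarith)]
        nlinarith
    _ ≤ Real.exp (2 * y) := by linarith [Real.add_one_le_exp (2 * y)]

theorem sum_sym_prod_map_le_two_mul_pow_mul_exp (s : Finset ι) (x : ι → ℝ) {c : ℝ} (hc : 0 < c)
    (hx₀ : ∀ i ∈ s, 0 ≤ x i) (hxc : ∀ i ∈ s, x i ≤ c) (n : ℕ) :
    ∑ m ∈ s.sym n, ((m : Multiset ι).map x).prod ≤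
      (2 * c) ^ n * Real.exp ((∑ i ∈ s, x i) / c) := by
  have hscale : ∀ m ∈ s.sym n, ((m : Multiset ι).map x).prod =
      (2 * c) ^ n * ((m : Multiset ι).map (x · / (2 * c))).prod := by
    intro m _
    rw [Multiset.prod_map_div, Multiset.map_const', Multiset.prod_replicate, Sym.card_coe]
    field_simp
  have hy₀ : ∀ i ∈ s, 0 ≤ x i / (2 * c) := fun i hi => div_nonneg (hx₀ i hi) (by positivity)
  have hy₁ : ∀ i ∈ s, x i / (2 * c) ≤ 1 / 2 := fun i hi => by
    rw [div_le_iff₀ (by positivity)]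
    linarith [hxc i hi]
  calc ∑ m ∈ s.sym n, ((m : Multiset ι).map x).prod
      = (2 * c) ^ n * ∑ m ∈ s.sym n, ((m : Multiset ι).map (x · / (2 * c))).prod := by
        rw [sum_congr rfl hscale, mul_sum]
    _ ≤ (2 * c) ^ n * ∏ i ∈ s, (1 - x i / (2 * c))⁻¹ := by
        gcongr
        exact sum_sym_prod_map_le_prod_inv_one_sub s _ hy₀
          (fun i hi => (hy₁ i hi).trans_lt (by norm_num)) n
    _ ≤ (2 * c) ^ n * ∏ i ∈ s, Real.exp (2 * (x i / (2 * c))) := by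
        refine mul_le_mul_of_nonneg_left (prod_le_prod (fun i hi => ?_) (fun i hi => ?_))
          (by positivity)
        · exact inv_nonneg.2 (by linarith [hy₁ i hi])
        · exact inv_one_sub_le_exp_two_mul (hy₀ i hi) (hy₁ i hi)
    _ = (2 * c) ^ n * Real.exp ((∑ i ∈ s, x i) / c) := by
        rw [← Real.exp_sum, sum_div]
        congr 3
        ext i
        field_simp

end CompleteHomogeneous

theorem Monotone.update_add_one {α : Type*} [PartialOrder α] [DecidableEq α] {k : α → ℕ}
    (hk : Monotone k) {j : α} (hj : ∀ i, j < i → k j < k i) :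
    Monotone (Function.update k j (k j + 1)) := by
  intro a b hab
  rcases eq_or_ne a j with rfl | ha
  · rcases eq_or_ne b a with rfl | hb
    · exact le_rfl
    · rw [Function.update_self, Function.update_of_ne hb]
      exact hj b (lt_of_le_of_ne hab hb.symm)
  · rw [Function.update_of_ne ha]
    rcases eq_or_ne b j with rfl | hb
    · rw [Function.update_self]
      exact (hk hab).trans (Nat.le_succ _)
    · rw [Function.update_of_ne hb]
      exact hk hab

theorem eq_of_monotone_of_coe_ofFn_eq {α : Type*} [LinearOrder α] {n : ℕ} {f g : Fin n → α}
    (hf : Monotone f) (hg : Monotone g) (h : (List.ofFn f : Multiset α) = List.ofFn g) :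
    f = g :=
  List.ofFn_injective ((Quotient.exact h).eq_of_sortedLE hf.sortedLE_ofFn hg.sortedLE_ofFn)

section ExcitedRow

variable {l : YoungDiagram} {ℓ : ℕ}

/-- Box `j` of the row `[ℓ]` after `k j` diagonal moves, for each `j < ℓ`. -/
def excitedRow (k : Fin ℓ → ℕ) : Finset (ℕ × ℕ) :=
  univ.image fun j => (k j, j + k j)

theorem injective_diagonalShift (k : Fin ℓ → ℕ) :
    Function.Injective fun j : Fin ℓ => (k j, (j : ℕ) + k j) := by
  intro i j h
  simp only [Prod.mk.injEq] at h
  omega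

theorem rowDiagram_cells (ℓ : ℕ) :
    (rowDiagram ℓ).cells = excitedRow (fun _ : Fin ℓ => 0) := by
  ext ⟨a, b⟩
  simp only [rowDiagram, rect, excitedRow, mem_product, mem_range, mem_image, mem_univ, true_and,
    add_zero, Prod.mk.injEq]
  constructor
  · rintro ⟨ha, hb⟩
    exact ⟨⟨b, hb⟩, by omega, rfl⟩
  · rintro ⟨j, rfl, rfl⟩
    exact ⟨zero_lt_one, j.isLt⟩

theorem rowDiagram_le (h : ℓ ≤ l.rowLen 0) : rowDiagram ℓ ≤ l := by
  intro u hu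
  rw [← YoungDiagram.mem_cells, rowDiagram_cells] at hu
  obtain ⟨j, -, rfl⟩ := mem_image.1 hu
  exact YoungDiagram.mem_iff_lt_rowLen.2 (by simpa using j.isLt.trans_le h)

theorem excitedRow_update (k : Fin ℓ → ℕ) (j : Fin ℓ) :
    excitedRow (Function.update k j (k j + 1)) =
      insert (k j + 1, j + k j + 1) ((excitedRow k).erase (k j, j + k j)) := by
  ext ⟨a, b⟩
  simp only [excitedRow, mem_insert, mem_erase, mem_image, mem_univ, true_and,
    Function.update_apply]
  constructor
  · rintro ⟨i, hi⟩
    split_ifs at hi with hij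
    · subst hij
      left
      simp only [Prod.mk.injEq] at hi ⊢
      omega
    · refine Or.inr ⟨?_, i, hi⟩
      rw [← hi]
      exact fun h => hij (injective_diagonalShift k h)
  · rintro (h | ⟨hne, i, hi⟩)
    · exact ⟨j, by simp_all; omega⟩
    · refine ⟨i, ?_⟩
      rw [if_neg]
      · exact hi
      · rintro rfl
        exact hne hi.symm

/-- An excitable box of an excited row lies strictly below all later boxes: otherwise the next
box would sit directly to its right, inside its upper-right square. -/
theorem lt_of_excitedRow_inter_URS {k : Fin ℓ → ℕ} (hk : Monotone k) {j i : Fin ℓ}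
    (hji : j < i) (h : excitedRow k ∩ URS (k j, j + k j) = {(k j, j + k j)}) : k j < k i := by
  by_contra hle
  have hnext : (j : ℕ) + 1 < ℓ := by omega
  have hkj' : k ⟨j + 1, hnext⟩ = k j :=
    le_antisymm ((hk (Fin.mk_le_of_le_val hji)).trans (not_lt.1 hle))
      (hk (Fin.le_iff_val_le_val.2 (Nat.le_succ _)))
  have hmem : (k ⟨j + 1, hnext⟩, j + 1 + k ⟨j + 1, hnext⟩) ∈
      excitedRow k ∩ URS (k j, j + k j) := by
    refine mem_inter.2 ⟨mem_image_of_mem _ (mem_univ _), ?_⟩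
    simp [URS, hkj', add_right_comm]
  rw [h, mem_singleton, Prod.mk.injEq] at hmem
  omega

theorem Excited.subset_cells {μ : YoungDiagram} (hμ : μ ≤ l) {E : Finset (ℕ × ℕ)}
    (hE : E ∈ Excited l μ) : E ⊆ l.cells := by
  induction hE with
  | refl => exact hμ
  | tail _ hstep ih =>
    obtain ⟨u, -, hURS, -, rfl⟩ := hstep
    exact insert_subset (hURS (by simp [URS])) ((erase_subset _ _).trans ih)

theorem exists_monotone_eq_excitedRow {E : Finset (ℕ × ℕ)}
    (hE : E ∈ Excited l (rowDiagram ℓ)) :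
    ∃ k : Fin ℓ → ℕ, Monotone k ∧ E = excitedRow k := by
  induction hE with
  | refl => exact ⟨fun _ => 0, monotone_const, rowDiagram_cells ℓ⟩
  | tail _ hstep ih =>
    obtain ⟨k, hk, rfl⟩ := ih
    obtain ⟨u, hu, -, hcap, rfl⟩ := hstep
    obtain ⟨j, -, rfl⟩ := mem_image.1 hu
    exact ⟨_, Monotone.update_add_one hk fun i hi => lt_of_excitedRow_inter_URS hk hi hcap,
      (excitedRow_update k j).symm⟩

def rowIndices (E : Finset (ℕ × ℕ)) : Multiset ℕ := E.val.map Prod.fst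

theorem rowIndices_excitedRow (k : Fin ℓ → ℕ) :
    rowIndices (excitedRow k) = (List.ofFn k : Multiset ℕ) := by
  rw [rowIndices, excitedRow, image_val_of_injOn (injective_diagonalShift k).injOn,
    Multiset.map_map]
  exact Fin.univ_val_map k

theorem injOn_rowIndices_excited_rowDiagram (l : YoungDiagram) (ℓ : ℕ) :
    Set.InjOn rowIndices (Excited l (rowDiagram ℓ)) := by
  intro E₁ hE₁ E₂ hE₂ h
  obtain ⟨k₁, hk₁, rfl⟩ := exists_monotone_eq_excitedRow hE₁
  obtain ⟨k₂, hk₂, rfl⟩ := exists_monotone_eq_excitedRow hE₂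
  rw [rowIndices_excitedRow, rowIndices_excitedRow] at h
  rw [eq_of_monotone_of_coe_ofFn_eq hk₁ hk₂ h]

theorem rowIndices_mem_image_sym (h : ℓ ≤ l.rowLen 0) {E : Finset (ℕ × ℕ)}
    (hE : E ∈ Excited l (rowDiagram ℓ)) :
    rowIndices E ∈ ((range (l.colLen 0)).sym ℓ).image ((↑) : Sym ℕ ℓ → Multiset ℕ) := by
  have hsub := Excited.subset_cells (rowDiagram_le h) hE
  obtain ⟨k, -, rfl⟩ := exists_monotone_eq_excitedRow hE
  refine mem_image.2 ⟨⟨rowIndices (excitedRow k), by simp [rowIndices_excitedRow]⟩, ?_, rfl⟩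
  refine mem_sym_iff.2 fun a ha => ?_
  obtain ⟨u, hu, rfl⟩ := Multiset.mem_map.1 ((Sym.mem_mk _ _ _).1 ha)
  exact mem_range.2 (YoungDiagram.mem_iff_lt_colLen.1
    (l.up_left_mem le_rfl (Nat.zero_le _) (hsub hu)))

end ExcitedRow

section Hooks

variable (l : YoungDiagram)

theorem hook_antitone_snd (i : ℕ) : Antitone fun j => hook l (i, j) := by
  intro j₁ j₂ h
  have := l.colLen_anti j₁ j₂ h
  dsimp only [hook]
  omega

theorem hook_le_maxHook (u : ℕ × ℕ) : hook l u ≤ maxHook l := by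
  have := l.rowLen_anti 0 u.1 (Nat.zero_le _)
  have := l.colLen_anti 0 u.2 (Nat.zero_le _)
  dsimp only [hook, maxHook]
  omega

theorem hook_diag_le_card_filter (k : ℕ) :
    hook l (k, k) ≤ #{u ∈ l.cells | min u.1 u.2 = k} := by
  let arm := (Ico k (l.rowLen k)).image fun j => (k, j)
  let leg := (Ico (k + 1) (l.colLen k)).image fun i => (i, k)
  have hdisj : Disjoint arm leg := by
    simp only [arm, leg, disjoint_left, mem_image, mem_Ico]
    rintro _ ⟨j, hj, rfl⟩ ⟨i, hi, h⟩
    simp only [Prod.mk.injEq] at h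
    omega
  have hsub : arm ∪ leg ⊆ {u ∈ l.cells | min u.1 u.2 = k} := by
    intro u hu
    simp only [arm, leg, mem_union, mem_image, mem_Ico] at hu
    rcases hu with ⟨j, hj, rfl⟩ | ⟨i, hi, rfl⟩
    · exact mem_filter.2 ⟨YoungDiagram.mem_iff_lt_rowLen.2 hj.2, by simp [hj.1]⟩
    · exact mem_filter.2 ⟨YoungDiagram.mem_iff_lt_colLen.2 hi.2, by simp; omega⟩
  calc hook l (k, k) ≤ #arm + #leg := by
        rw [card_image_of_injective _ (Prod.mk_right_injective k),
          card_image_of_injective _ (Prod.mk_left_injective k), Nat.card_Ico, Nat.card_Ico]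
        dsimp only [hook]
        omega
    _ = #(arm ∪ leg) := (card_union_of_disjoint hdisj).symm
    _ ≤ _ := card_le_card hsub

theorem sum_hook_diag_le_card (s : Finset ℕ) : ∑ k ∈ s, hook l (k, k) ≤ l.card :=
  calc ∑ k ∈ s, hook l (k, k) ≤ ∑ k ∈ s, #{u ∈ l.cells | min u.1 u.2 = k} :=
        sum_le_sum fun k _ => hook_diag_le_card_filter l k
    _ = #{u ∈ l.cells | min u.1 u.2 ∈ s} := sum_card_fiberwise_eq_card_filter _ _ _
    _ ≤ l.card := card_filter_le _ _

end Hooks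

theorem prod_hook_le_prod_hook_diag {l : YoungDiagram} {ℓ : ℕ} {E : Finset (ℕ × ℕ)}
    (hE : E ∈ Excited l (rowDiagram ℓ)) :
    ∏ u ∈ E, hook l u ≤ ((rowIndices E).map fun k => hook l (k, k)).prod := by
  obtain ⟨k, -, rfl⟩ := exists_monotone_eq_excitedRow hE
  rw [rowIndices, Multiset.map_map, ← prod_eq_multiset_prod]
  refine prod_le_prod' fun u hu => ?_
  obtain ⟨j, -, rfl⟩ := mem_image.1 hu
  exact hook_antitone_snd l _ (Nat.le_add_left _ _)

theorem excitedSum_rowDiagram_le {l : YoungDiagram} {ℓ : ℕ} (h : ℓ ≤ l.rowLen 0) :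
    excitedSum l (rowDiagram ℓ) ≤
      ∑ m ∈ (range (l.colLen 0)).sym ℓ, ((m : Multiset ℕ).map fun k => hook l (k, k)).prod := by
  let x : ℕ → ℕ := fun k => hook l (k, k)
  have hfin : (Excited l (rowDiagram ℓ)).Finite :=
    l.cells.powerset.finite_toSet.subset fun E hE => by
      simpa using Excited.subset_cells (rowDiagram_le h) hE
  have hinj := injOn_rowIndices_excited_rowDiagram l ℓ
  rw [excitedSum, finsum_mem_eq_finite_toFinset_sum _ hfin]
  calc ∑ E ∈ hfin.toFinset, ∏ u ∈ E, hook l u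
      ≤ ∑ E ∈ hfin.toFinset, ((rowIndices E).map x).prod :=
        sum_le_sum fun E hE => prod_hook_le_prod_hook_diag (hfin.mem_toFinset.1 hE)
    _ = ∑ m ∈ hfin.toFinset.image rowIndices, (m.map x).prod := by
        rw [sum_image fun E₁ h₁ E₂ h₂ =>
          hinj (hfin.mem_toFinset.1 h₁) (hfin.mem_toFinset.1 h₂)]
    _ ≤ ∑ m ∈ ((range (l.colLen 0)).sym ℓ).image ((↑) : Sym ℕ ℓ → Multiset ℕ),
          (m.map x).prod :=
        sum_le_sum_of_subset <| image_subset_iff.2 fun E hE =>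
          rowIndices_mem_image_sym h (hfin.mem_toFinset.1 hE)
    _ = _ := sum_image Sym.coe_injective.injOn

/-- bound on the excited sum of a long row. -/
theorem excited_sum_row_large (l : YoungDiagram) (ℓ : ℕ) (h1 : 1 ≤ ℓ) (h2 : ℓ ≤ l.rowLen 0)
    (h3 : (l.card : ℝ) / (maxHook l : ℝ) ≤ (ℓ : ℝ)) :
    (excitedSum l (rowDiagram ℓ) : ℝ) ≤
      (4 * Real.exp 1 ^ 2) ^ ℓ * (maxHook l : ℝ) ^ ℓ := by
  have hs : (0 : ℝ) < maxHook l := by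
    have := YoungDiagram.mem_iff_lt_colLen.1
      (YoungDiagram.mem_iff_lt_rowLen.2 (h1.trans h2) : ((0, 0) : ℕ × ℕ) ∈ l)
    rw [maxHook, Nat.cast_pos]
    omega
  have hdiag : (∑ k ∈ range (l.colLen 0), (hook l (k, k) : ℝ)) / maxHook l ≤ ℓ := by
    refine le_trans ?_ h3
    gcongr
    exact_mod_cast sum_hook_diag_le_card l _
  have hcomb := Nat.cast_le (α := ℝ) |>.2 (excitedSum_rowDiagram_le h2)
  push_cast [Nat.cast_multiset_prod, Multiset.map_map, Function.comp_def] at hcomb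
  calc (excitedSum l (rowDiagram ℓ) : ℝ)
      ≤ ∑ m ∈ (range (l.colLen 0)).sym ℓ,
          ((m : Multiset ℕ).map fun k => (hook l (k, k) : ℝ)).prod := hcomb
    _ ≤ (2 * maxHook l) ^ ℓ * Real.exp ℓ :=
        (sum_sym_prod_map_le_two_mul_pow_mul_exp _ _ hs (fun _ _ => Nat.cast_nonneg _)
          (fun k _ => by exact_mod_cast hook_le_maxHook l (k, k)) ℓ).trans
          (mul_le_mul_of_nonneg_left (Real.exp_le_exp.2 hdiag) (by positivity))
    _ = (2 * Real.exp 1) ^ ℓ * (maxHook l : ℝ) ^ ℓ := by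
        rw [← Real.exp_one_pow, mul_pow, mul_pow]
        ring
    _ ≤ (4 * Real.exp 1 ^ 2) ^ ℓ * (maxHook l : ℝ) ^ ℓ := by
        gcongr
        · norm_num
        · exact le_self_pow₀ (Real.one_le_exp zero_le_one) two_ne_zero

end ThickHookPaper
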